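/- arXiv:2311.14921 — 7 statements merged into one kernel-verified Lean document; each statement's English description precedes it below -/
import Mathlib

section
/- Let g(β) = c · ∏_{j=1}^{n} (β − β_j) be a complex polynomial with c ≠ 0 and roots β_1, …, β_n listed with multiplicity, and let R > 0 satisfy |β_j| ≠ R for all j. Then (1/(2π)) ∫_0^{2π} log|g(R e^{iθ})| dθ = log|c| + Σ_{j=1}^{n} log(max(R, |β_j|)). -/
/-!
Off the finitely many roots `log ‖c ∏ (z - βⱼ)‖ = log ‖c‖ + ∑ log ‖z - βⱼ‖`, and a finite set is
negligible on the circle, so the average splits into one average per root. For `‖β‖ > R` the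
function `log ‖z - β‖` is harmonic on the closed disc and the mean value property gives `log ‖β‖`;
for `‖β‖ < R` one has `‖z - β‖ = R ‖1 - β̄ z / R²‖` on the circle, and the same property applied to
the second factor gives `log R`.
-/

open Real Finset Filter

lemma circleAverage_log_norm_sub_const_eq_log_max {a c : ℂ} {R : ℝ} (hR : 0 < R) :
    circleAverage (log ‖· - a‖) c R = log (max R ‖c - a‖) := by
  rcases le_or_gt ‖c - a‖ R with h | h
  · rw [max_eq_left h]
    exact circleAverage_log_norm_sub_const_of_mem_closedBall
      (by rwa [Metric.mem_closedBall, dist_eq_norm', abs_of_pos hR])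
  · have h₁ : 1 ≤ |R⁻¹ * ‖c - a‖| := by
      rw [abs_of_pos (mul_pos (inv_pos.2 hR) (hR.trans h))]
      exact (one_le_inv_mul₀ hR).2 h.le
    rw [circleAverage_log_norm_sub_const_eq_log_radius_add_posLog hR.ne', max_eq_right h.le,
      posLog_eq_log h₁, Real.log_mul (inv_ne_zero hR.ne') (hR.trans h).ne', Real.log_inv]
    ring

lemma log_norm_const_mul_prod_sub_eventuallyEq {ι : Type*} (s : Finset ι) {c : ℂ} (hc : c ≠ 0)
    (β : ι → ℂ) (U : Set ℂ) :
    (fun z ↦ log ‖c * ∏ j ∈ s, (z - β j)‖) =ᶠ[codiscreteWithin U]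
      fun z ↦ log ‖c‖ + ∑ j ∈ s, log ‖z - β j‖ := by
  filter_upwards [compl_finite_mem_codiscreteWithin (s.finite_toSet.image β)] with z hz
  have hβ : ∀ j ∈ s, ‖z - β j‖ ≠ 0 := fun j hj ↦
    norm_ne_zero_iff.2 (sub_ne_zero.2 fun h ↦ hz ⟨j, hj, h.symm⟩)
  rw [norm_mul, norm_prod, Real.log_mul (norm_ne_zero_iff.2 hc) (prod_ne_zero_iff.2 hβ),
    Real.log_prod hβ]

theorem circleAverage_log_norm_const_mul_prod_sub {ι : Type*} (s : Finset ι) {c : ℂ}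
    (hc : c ≠ 0) (β : ι → ℂ) {z₀ : ℂ} {R : ℝ} (hR : 0 < R) :
    circleAverage (fun z ↦ log ‖c * ∏ j ∈ s, (z - β j)‖) z₀ R =
      log ‖c‖ + ∑ j ∈ s, log (max R ‖z₀ - β j‖) := by
  rw [circleAverage_congr_codiscreteWithin (log_norm_const_mul_prod_sub_eventuallyEq s hc β _)
      hR.ne', circleAverage_fun_add (circleIntegrable_const _ _ _)
      (CircleIntegrable.fun_sum s fun j _ ↦ circleIntegrable_log_norm_sub_const R),
    circleAverage_const, circleAverage_fun_sum fun j _ ↦ circleIntegrable_log_norm_sub_const R]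
  simp_rw [circleAverage_log_norm_sub_const_eq_log_max hR]

theorem circle_log_potential_polynomial_general (n : ℕ) (c : ℂ) (hc : c ≠ 0) (βs : Fin n → ℂ)
    (R : ℝ) (hR : 0 < R) :
    (1 / (2 * π)) * ∫ θ in (0 : ℝ)..(2 * π),
        Real.log ‖
          (c * ∏ j : Fin n, ((R : ℂ) * Complex.exp (θ * Complex.I) - βs j))‖ =
      Real.log ‖c‖ + ∑ j : Fin n, Real.log (max R (‖βs j‖)) := by
  simpa [circleAverage_def, circleMap] using
    circleAverage_log_norm_const_mul_prod_sub univ hc βs (z₀ := 0) hR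

/-- For a polynomial `g(β) = c ∏_{j=1}^n (β − β_j)` with `c ≠ 0` and `R > 0` with
`|β_j| ≠ R` for all `j`,
`(1/(2π)) ∫_0^{2π} log|g(R e^{iθ})| dθ = log|c| + Σ_j log(max(R, |β_j|))`. -/
theorem circle_log_potential_polynomial (n : ℕ) (c : ℂ) (hc : c ≠ 0) (βs : Fin n → ℂ)
    (R : ℝ) (hR : 0 < R) (hβ : ∀ j, ‖βs j‖ ≠ R) :
    (1 / (2 * π)) * ∫ θ in (0 : ℝ)..(2 * π),
        Real.log ‖
          (c * ∏ j : Fin n, ((R : ℂ) * Complex.exp (θ * Complex.I) - βs j))‖ =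
      Real.log ‖c‖ + ∑ j : Fin n, Real.log (max R (‖βs j‖)) :=
  circle_log_potential_polynomial_general n c hc βs R hR
end

section
/- Let t_L, t_R > 0 be real, N ≥ 1 an integer, and A the N×N complex matrix with A_{j,j+1} = t_L and A_{j+1,j} = t_R for 1 ≤ j ≤ N−1 and all other entries zero. Then a complex number E is an eigenvalue of A if and only if E = 2√(t_L t_R) · cos(mπ/(N+1)) for some integer m with 1 ≤ m ≤ N. -/
open Real Complex Matrix

/-- The open-boundary Hatano–Nelson Hamiltonian: the `N×N` matrix with `A_{j,j+1} = t_L`,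
`A_{j+1,j} = t_R` and all other entries zero. -/
noncomputable def hatanoNelson (N : ℕ) (tL tR : ℝ) : Matrix (Fin N) (Fin N) ℂ :=
  Matrix.of fun i j =>
    if (j : ℕ) = (i : ℕ) + 1 then (tL : ℂ)
    else if (i : ℕ) = (j : ℕ) + 1 then (tR : ℂ)
    else 0

/-!
With `r = √(t_R / t_L)` and `θ = mπ/(N+1)`, the vector `v_j = r^j sin(jθ)` is an eigenvector for
`2√(t_L t_R) cos θ`: the factor `r^j` turns the two different hoppings into the symmetric ones,
and `sin(jθ)` vanishes at the fictitious sites `j = 0` and `j = N + 1`, so the open ends impose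
no extra condition. For `1 ≤ m ≤ N` these are `N` distinct eigenvalues, since `cos` is injective
on `[0, π]`, and the characteristic polynomial has degree `N`, so there are no others.
-/

open Polynomial

theorem Polynomial.isRoot_iff_mem_of_natDegree_le_card {R : Type*} [CommRing R] [IsDomain R]
    {p : R[X]} (hp : p ≠ 0) {s : Finset R} (hs : ∀ x ∈ s, p.IsRoot x)
    (hcard : p.natDegree ≤ s.card) {x : R} : p.IsRoot x ↔ x ∈ s := by
  have hle : s.val ≤ p.roots :=
    (Multiset.le_iff_subset s.nodup).2 fun y hy => (mem_roots hp).2 (hs y hy)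
  have hroots : p.roots = s.val :=
    (Multiset.eq_of_le_of_card_le hle ((card_roots' p).trans hcard)).symm
  rw [← mem_roots hp, hroots, Finset.mem_val]

section Eigenvalues

variable {K n : Type*} [Field K] [Fintype n] [DecidableEq n]

theorem Matrix.exists_mulVec_eq_smul_iff_isRoot_charpoly (A : Matrix n n K) (μ : K) :
    (∃ v ≠ 0, A *ᵥ v = μ • v) ↔ A.charpoly.IsRoot μ := by
  rw [IsRoot.def, eval_charpoly, ← exists_mulVec_eq_zero_iff]
  simp [sub_mulVec, sub_eq_zero, eq_comm]

theorem Matrix.exists_mulVec_eq_smul_iff_mem_of_card_le (A : Matrix n n K) {s : Finset K}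
    (hs : ∀ μ ∈ s, ∃ v ≠ 0, A *ᵥ v = μ • v) (hcard : Fintype.card n ≤ s.card) (μ : K) :
    (∃ v ≠ 0, A *ᵥ v = μ • v) ↔ μ ∈ s := by
  simp only [exists_mulVec_eq_smul_iff_isRoot_charpoly] at hs ⊢
  exact isRoot_iff_mem_of_natDegree_le_card A.charpoly_monic.ne_zero hs
    (A.charpoly_natDegree_eq_dim ▸ hcard)

end Eigenvalues

theorem Real.mul_sqrt_div_self {a : ℝ} (ha : 0 < a) (b : ℝ) : a * √(b / a) = √(a * b) :=
  calc a * √(b / a) = √(a * a) * √(b / a) := by rw [sqrt_mul_self ha.le]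
    _ = √(a * b) := by rw [← sqrt_mul (mul_self_nonneg a), mul_assoc, mul_div_cancel₀ _ ha.ne']

theorem pow_mul_sin_recurrence {a b r : ℝ} (h : a * r ^ 2 = b) (θ : ℝ) (k : ℕ) :
    a * (r ^ (k + 2) * Real.sin ((k + 2) * θ)) + b * (r ^ k * Real.sin (k * θ)) =
      2 * (a * r) * Real.cos θ * (r ^ (k + 1) * Real.sin ((k + 1) * θ)) := by
  have htrig : Real.sin ((k + 2) * θ) + Real.sin (k * θ) =
      2 * Real.cos θ * Real.sin ((k + 1) * θ) := by
    rw [Real.sin_add_sin, show ((k + 2) * θ + k * θ) / 2 = (k + 1) * θ by ring,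
      show ((k + 2) * θ - k * θ) / 2 = θ by ring]
    ring
  rw [← h]
  linear_combination a * r ^ (k + 2) * htrig

theorem hatanoNelson_mulVec_apply {N : ℕ} (tL tR : ℝ) {w : ℕ → ℂ} (hw0 : w 0 = 0)
    (hwN : w (N + 1) = 0) (i : Fin N) :
    (hatanoNelson N tL tR *ᵥ fun j => w (j + 1)) i = tL * w (i + 2) + tR * w i := by
  have hsplit (j : ℕ) : (if j = (i : ℕ) + 1 then (tL : ℂ)
      else if (i : ℕ) = j + 1 then (tR : ℂ) else 0) * w (j + 1) =
      (if j = i + 1 then tL * w (i + 2) else 0) + (if j + 1 = i then tR * w i else 0) := by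
    split_ifs with h1 _ h3 <;> first | omega | simp
    · simp [h1]
    · exact .inl (congrArg w h3.symm)
  have hL : ∑ j ∈ Finset.range N, (if j = i + 1 then (tL : ℂ) * w (i + 2) else 0) =
      tL * w (i + 2) := by
    rw [Finset.sum_ite_eq', ite_eq_left_iff, Finset.mem_range]
    intro h
    rw [show (i : ℕ) + 2 = N + 1 by omega, hwN, mul_zero]
  have hR : ∑ j ∈ Finset.range N, (if j + 1 = i then (tR : ℂ) * w i else 0) = tR * w i := by
    obtain hi0 | ⟨k, hk⟩ : (i : ℕ) = 0 ∨ ∃ k, (i : ℕ) = k + 1 := by cases (i : ℕ) <;> simp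
    · simp [hi0, hw0]
    · simp only [hk, add_left_inj, Finset.sum_ite_eq', Finset.mem_range]
      rw [if_pos (by omega)]
  simp only [mulVec, dotProduct, hatanoNelson, of_apply]
  rw [Fin.sum_univ_eq_sum_range (fun j => (if j = (i : ℕ) + 1 then (tL : ℂ)
    else if (i : ℕ) = j + 1 then (tR : ℂ) else 0) * w (j + 1)),
    Finset.sum_congr rfl fun j _ => hsplit j, Finset.sum_add_distrib, hL, hR]

noncomputable def hatanoNelsonEigenvalue (N : ℕ) (tL tR : ℝ) (m : ℕ) : ℂ :=
  ((2 * √(tL * tR) * Real.cos (m * π / (N + 1)) : ℝ) : ℂ)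

theorem hatanoNelsonEigenvalue_injOn {N : ℕ} {tL tR : ℝ} (h : 0 < tL * tR) :
    Set.InjOn (hatanoNelsonEigenvalue N tL tR) (Set.Iic (N + 1)) := by
  have hangle {m : ℕ} (hm : m ≤ N + 1) : m * π / (N + 1) ∈ Set.Icc 0 π := by
    refine ⟨by positivity, div_le_of_le_mul₀ (by positivity) pi_pos.le ?_⟩
    rw [mul_comm]
    gcongr
    exact_mod_cast hm
  intro a ha b hb hab
  have hcos := mul_left_cancel₀ (by positivity) (Complex.ofReal_injective hab)
  have := injOn_cos (hangle ha) (hangle hb) hcos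
  field_simp at this
  exact_mod_cast this

theorem hatanoNelson_hasEigenvector {N : ℕ} {tL tR : ℝ} (htL : 0 < tL) (htR : 0 < tR) {m : ℕ}
    (hm1 : 1 ≤ m) (hmN : m ≤ N) :
    ∃ v ≠ 0, hatanoNelson N tL tR *ᵥ v = hatanoNelsonEigenvalue N tL tR m • v := by
  set θ : ℝ := m * π / (N + 1)
  set r : ℝ := √(tR / tL)
  set w : ℕ → ℂ := fun k => ((r ^ k * Real.sin (k * θ) : ℝ) : ℂ)
  have hr : tL * r ^ 2 = tR := by
    rw [sq_sqrt (div_pos htR htL).le]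
    field_simp
  have hwN : w (N + 1) = 0 := by
    have : ((N + 1 : ℕ) : ℝ) * θ = m * π := by
      simp only [θ]
      push_cast
      field_simp
    simp only [w, this, Real.sin_nat_mul_pi, mul_zero, Complex.ofReal_zero]
  have hsin : 0 < Real.sin θ := by
    refine sin_pos_of_pos_of_lt_pi (by positivity) ?_
    rw [div_lt_iff₀ (by positivity), mul_comm]
    gcongr
    exact_mod_cast Nat.lt_succ_of_le hmN
  refine ⟨fun j => w (j + 1), fun hv => ?_, funext fun i => ?_⟩
  · have h1 : w 1 = 0 := congrFun hv ⟨0, hm1.trans hmN⟩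
    simp only [w, pow_one, Nat.cast_one, one_mul, Complex.ofReal_eq_zero] at h1
    exact (mul_pos (sqrt_pos.2 (div_pos htR htL)) hsin).ne' h1
  · rw [hatanoNelson_mulVec_apply tL tR (by simp [w]) hwN i, Pi.smul_apply, smul_eq_mul,
      hatanoNelsonEigenvalue, ← mul_sqrt_div_self htL]
    change _ = ((2 * (tL * r) * Real.cos θ : ℝ) : ℂ) * _
    simp only [w]
    exact_mod_cast pow_mul_sin_recurrence hr θ i

theorem hatanoNelson_eigenvalues_general (N : ℕ) (tL tR : ℝ)
    (htL : 0 < tL) (htR : 0 < tR) (E : ℂ) :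
    (∃ v : Fin N → ℂ, v ≠ 0 ∧ (hatanoNelson N tL tR).mulVec v = E • v) ↔
      ∃ m : ℕ, 1 ≤ m ∧ m ≤ N ∧
        E = ((2 * Real.sqrt (tL * tR) * Real.cos (m * π / (N + 1)) : ℝ) : ℂ) := by
  have hinj : Set.InjOn (hatanoNelsonEigenvalue N tL tR) (Finset.Icc 1 N) :=
    (hatanoNelsonEigenvalue_injOn (mul_pos htL htR)).mono fun m hm => by
      simp only [Finset.coe_Icc, Set.mem_Icc, Set.mem_Iic] at hm ⊢
      omega
  rw [(hatanoNelson N tL tR).exists_mulVec_eq_smul_iff_mem_of_card_le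
    (s := (Finset.Icc 1 N).image (hatanoNelsonEigenvalue N tL tR)) ?_ ?_]
  · simp [hatanoNelsonEigenvalue, eq_comm, and_assoc]
  · simp only [Finset.mem_image, Finset.mem_Icc]
    rintro _ ⟨m, ⟨hm1, hmN⟩, rfl⟩
    exact hatanoNelson_hasEigenvector htL htR hm1 hmN
  · simp [Finset.card_image_of_injOn hinj]

/-- `E` is an eigenvalue of the open-boundary Hatano–Nelson Hamiltonian if and only if
`E = 2√(t_L t_R) cos(mπ/(N+1))` for some integer `1 ≤ m ≤ N`. -/
theorem hatanoNelson_eigenvalues (N : ℕ) (hN : 1 ≤ N) (tL tR : ℝ)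
    (htL : 0 < tL) (htR : 0 < tR) (E : ℂ) :
    (∃ v : Fin N → ℂ, v ≠ 0 ∧ (hatanoNelson N tL tR).mulVec v = E • v) ↔
      ∃ m : ℕ, 1 ≤ m ∧ m ≤ N ∧
        E = ((2 * Real.sqrt (tL * tR) * Real.cos (m * π / (N + 1)) : ℝ) : ℂ) :=
  hatanoNelson_eigenvalues_general N tL tR htL htR E
end

section
/- Let t_L, t_R > 0 be real. For E ∈ ℂ, let β_+ and β_− denote the two roots (with multiplicity) of the quadratic t_L β² − E β + t_R. Then |β_+| = |β_−| if and only if E is real and |E| ≤ 2√(t_L t_R). Hence the set of E for which the two β-solutions of the Hatano–Nelson characteristic polynomial have equal modulus is exactly the real segment [−2√(t_L t_R), 2√(t_L t_R)] in ℂ. -/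
/-! By Vieta, `β₊ β₋ = t_R / t_L > 0` and `β₊ + β₋ = E / t_L`. When the product of two complex
numbers is a positive real, they have equal modulus exactly when they are complex conjugate. A
conjugate pair has real sum `2 Re β₊` with `(Re β₊)² ≤ |β₊|² = t_R / t_L`; conversely, if the sum is
real, `conj β₊` is again a root of the now real quadratic, so it is `β₋` unless `β₊`, and then
`β₋`, is real, in which case a nonpositive discriminant forces `β₊ = β₋`. -/

open Real Complex

theorem eq_mul_add_and_eq_mul_mul_of_forall_eq {R : Type*} [CommRing R] {a b c z w : R}
    (h : ∀ x, a * x ^ 2 - b * x + c = a * (x - z) * (x - w)) :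
    b = a * (z + w) ∧ c = a * (z * w) := by
  have h0 := h 0
  have h1 := h 1
  constructor
  · linear_combination h0 - h1
  · linear_combination h0

namespace Complex

open ComplexConjugate

theorem norm_eq_norm_iff_conj_eq_of_mul_eq_ofReal {z w : ℂ} {c : ℝ} (hc : 0 < c)
    (hzw : z * w = c) : ‖z‖ = ‖w‖ ↔ conj z = w := by
  refine ⟨fun h ↦ ?_, fun h ↦ h ▸ (norm_conj z).symm⟩
  have hz : z ≠ 0 := by
    rintro rfl
    exact hc.ne' (by exact_mod_cast hzw.symm.trans (zero_mul w))
  have hnormSq : (normSq z : ℂ) = c := by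
    rw [normSq_eq_norm_sq, sq]
    nth_rw 2 [h]
    rw [← norm_mul, hzw, norm_real, Real.norm_of_nonneg hc.le]
  exact mul_left_cancel₀ hz (by rw [mul_conj, hnormSq, hzw])

theorem conj_eq_iff_of_mul_eq_ofReal {z w : ℂ} {c : ℝ} (hzw : z * w = c) :
    conj z = w ↔ (z + w).im = 0 ∧ (z + w).re ^ 2 ≤ 4 * c := by
  constructor
  · rintro rfl
    have hnormSq : normSq z = c := by exact_mod_cast (mul_conj z).symm.trans hzw
    refine ⟨by simp, ?_⟩
    rw [← hnormSq, normSq_apply]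
    simp only [add_re, conj_re]
    nlinarith [sq_nonneg z.im]
  · rintro ⟨him, hdisc⟩
    -- `conj z` is a root of the real quadratic `X ^ 2 - (z + w) X + c`, whose roots are `z` and `w`.
    have hroot : (conj z - z) * (conj z - w) = conj (z * z - (z + w) * z + c) := by
      rw [map_add, map_sub, map_mul, map_mul, conj_eq_iff_im.mpr him, conj_ofReal]
      linear_combination hzw
    rw [show z * z - (z + w) * z + c = 0 by linear_combination -hzw, map_zero, mul_eq_zero,
      sub_eq_zero, sub_eq_zero] at hroot
    rcases hroot with hz | hw
    -- For real `z` and `w` the discriminant `(z - w) ^ 2` is nonpositive, so `z = w`.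
    · have hzim : z.im = 0 := conj_eq_iff_im.mp hz
      have hwim : w.im = 0 := by simpa [hzim] using him
      have hc : z.re * w.re = c := by simpa [hzim, hwim] using congrArg re hzw
      have hre : z.re = w.re := by
        simp only [add_re] at hdisc
        nlinarith [sq_nonneg (z.re - w.re)]
      rw [hz]
      exact Complex.ext hre (hzim.trans hwim.symm)
    · exact hw

end Complex

theorem abs_le_two_mul_sqrt_iff {x y : ℝ} (hy : 0 ≤ y) : |x| ≤ 2 * √y ↔ x ^ 2 ≤ 4 * y := by
  rw [← abs_of_nonneg (by positivity : 0 ≤ 2 * √y), ← sq_le_sq, mul_pow, sq_sqrt hy]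
  norm_num

/-- GBZ condition for the Hatano–Nelson model: the two roots `β₊, β₋` of
`t_L β² − E β + t_R` have equal modulus if and only if `E` is real with
`|E| ≤ 2√(t_L t_R)`, i.e. `E` lies on the real segment `[−2√(t_L t_R), 2√(t_L t_R)]`. -/
theorem hatanoNelson_gbz_condition (tL tR : ℝ) (htL : 0 < tL) (htR : 0 < tR)
    (E : ℂ) (βp βm : ℂ)
    (hfact : ∀ β : ℂ, (tL : ℂ) * β ^ 2 - E * β + (tR : ℂ) =
      (tL : ℂ) * (β - βp) * (β - βm)) :
    ‖βp‖ = ‖βm‖ ↔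
      (E.im = 0 ∧ |E.re| ≤ 2 * Real.sqrt (tL * tR)) := by
  obtain ⟨hE, htR'⟩ := eq_mul_add_and_eq_mul_mul_of_forall_eq hfact
  have htL0 : (tL : ℂ) ≠ 0 := ofReal_ne_zero.mpr htL.ne'
  have hprod : βp * βm = ((tR / tL : ℝ) : ℂ) := by
    push_cast
    rw [htR']
    field_simp
  have hsum : βp + βm = E / tL := by
    rw [hE]
    field_simp
  rw [norm_eq_norm_iff_conj_eq_of_mul_eq_ofReal (div_pos htR htL) hprod,
    conj_eq_iff_of_mul_eq_ofReal hprod, hsum, div_ofReal_im, div_ofReal_re,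
    div_eq_zero_iff, or_iff_left htL.ne', abs_le_two_mul_sqrt_iff (by positivity), div_pow,
    div_le_iff₀ (by positivity),
    show 4 * (tR / tL) * tL ^ 2 = 4 * (tL * tR) by field_simp]
end

section
/- Let t_L, t_R > 0 be real and E ∈ ℂ. Let β_1, β_2 be the two roots of t_L β² − E β + t_R ordered so that |β_1| ≤ |β_2|, and suppose R > 0 satisfies |β_1| < R < |β_2|. Then (1/(2π)) ∫_0^{2π} log| t_L R e^{iθ} + t_R R^{−1} e^{−iθ} − E | dθ = log(t_L) + log|β_2|. -/
/-!
On the circle `|z| = R` the factorization `t_L z + t_R z⁻¹ - E = t_L (z - β₁)(z - β₂) / z` splits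
the potential into `log t_L` plus circle averages of `log |z - a|` for `a = β₁, β₂, 0`. By the
mean value property such an average is `log (max R |a|)`: the terms for `β₁` and `0` are both
`log R` and cancel, leaving `log t_L + log |β₂|`.
-/

open Real Metric

theorem circleAverage_log_norm_sub_const_of_notMem_closedBall {a c : ℂ} {R : ℝ}
    (ha : a ∉ closedBall c |R|) :
    circleAverage (log ‖· - a‖) c R = log ‖c - a‖ := by
  rcases eq_or_ne R 0 with rfl | hR
  · simp
  rw [mem_closedBall', dist_eq_norm, not_le] at ha
  have hca : ‖c - a‖ ≠ 0 := ((abs_nonneg R).trans_lt ha).ne'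
  have hlarge : 1 ≤ |R⁻¹ * ‖c - a‖| := by
    rw [abs_mul, abs_inv, abs_norm]
    exact (one_le_inv_mul₀ (abs_pos.mpr hR)).mpr ha.le
  rw [circleAverage_log_norm_sub_const_eq_log_radius_add_posLog hR, posLog_eq_log hlarge,
    log_mul (inv_ne_zero hR) hca, log_inv]
  ring

theorem mul_add_mul_inv_sub_eq_div {a b E β₁ β₂ z : ℂ}
    (hfact : ∀ β, a * β ^ 2 - E * β + b = a * (β - β₁) * (β - β₂)) (hz : z ≠ 0) :
    a * z + b * z⁻¹ - E = a * (z - β₁) * (z - β₂) / z := by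
  rw [← hfact]
  field_simp
  ring

theorem log_norm_mul_add_mul_inv_sub {a b E β₁ β₂ z : ℂ}
    (hfact : ∀ β, a * β ^ 2 - E * β + b = a * (β - β₁) * (β - β₂)) (ha : a ≠ 0)
    (hz : z ≠ 0) (h₁ : z ≠ β₁) (h₂ : z ≠ β₂) :
    log ‖a * z + b * z⁻¹ - E‖ =
      log ‖a‖ + log ‖z - β₁‖ + log ‖z - β₂‖ - log ‖z‖ := by
  rw [mul_add_mul_inv_sub_eq_div hfact hz, norm_div, norm_mul, norm_mul,
    log_div, log_mul, log_mul] <;> simp [*, sub_eq_zero]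

theorem hatanoNelson_potential_local_form_general (tL tR : ℝ) (htL : 0 < tL)
    (E : ℂ) (β₁ β₂ : ℂ)
    (hfact : ∀ β : ℂ, (tL : ℂ) * β ^ 2 - E * β + (tR : ℂ) =
      (tL : ℂ) * (β - β₁) * (β - β₂))
    (R : ℝ)
    (hR₁ : ‖β₁‖ < R) (hR₂ : R < ‖β₂‖) :
    (1 / (2 * π)) * ∫ θ in (0 : ℝ)..(2 * π),
        Real.log (‖
          ((tL : ℂ) * ((R : ℂ) * Complex.exp (θ * Complex.I)) +
            (tR : ℂ) * ((R : ℂ))⁻¹ * Complex.exp (-(θ * Complex.I)) - E)‖) =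
      Real.log tL + Real.log ‖β₂‖ := by
  have hRpos : 0 < R := (norm_nonneg β₁).trans_lt hR₁
  have hR : |R| = R := abs_of_pos hRpos
  have h₀ : (0 : ℂ) ∈ closedBall 0 |R| := by simp
  have h₁ : β₁ ∈ closedBall 0 |R| := by simpa [hR] using hR₁.le
  have h₂ : β₂ ∉ closedBall 0 |R| := by simpa [hR] using hR₂
  calc _ = circleAverage (fun z ↦ log ‖(tL : ℂ) * z + tR * z⁻¹ - E‖) 0 R := by
        rw [circleAverage_def, smul_eq_mul, one_div]
        congr 2 with θ
        rw [circleMap_zero, Complex.exp_neg, mul_inv]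
        ring_nf
    _ = circleAverage (fun z ↦ log ‖(tL : ℂ)‖ + log ‖z - β₁‖ + log ‖z - β₂‖ -
          log ‖z - 0‖) 0 R := by
        refine circleAverage_congr_sphere fun z hz ↦ ?_
        rw [mem_sphere_zero_iff_norm, hR] at hz
        rw [sub_zero]
        refine log_norm_mul_add_mul_inv_sub hfact (by exact_mod_cast htL.ne') ?_ ?_ ?_
        · exact ne_of_apply_ne norm (by rw [hz, norm_zero]; exact hRpos.ne')
        · exact ne_of_apply_ne norm (by rw [hz]; exact hR₁.ne')
        · exact ne_of_apply_ne norm (by rw [hz]; exact hR₂.ne)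
    _ = log ‖(tL : ℂ)‖ + log R + log ‖0 - β₂‖ - log R := by
        rw [circleAverage_fun_sub, circleAverage_fun_add, circleAverage_fun_add,
          circleAverage_const, circleAverage_log_norm_sub_const_of_mem_closedBall h₁,
          circleAverage_log_norm_sub_const_of_notMem_closedBall h₂,
          circleAverage_log_norm_sub_const_of_mem_closedBall h₀]
        all_goals fun_prop
    _ = log tL + log ‖β₂‖ := by
        rw [Complex.norm_real, Real.norm_of_nonneg htL.le, zero_sub, norm_neg]
        ring

/-- For the Hatano–Nelson model `H(β) = t_L β + t_R β⁻¹`, if the roots of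
`t_L β² − E β + t_R` satisfy `|β₁| ≤ |β₂|` and `|β₁| < R < |β₂|`, then the Coulomb
potential generated at `E` by the rescaled spectral loop `H(R e^{iθ})` equals
`log t_L + log|β₂|`. -/
theorem hatanoNelson_potential_local_form (tL tR : ℝ) (htL : 0 < tL) (htR : 0 < tR)
    (E : ℂ) (β₁ β₂ : ℂ)
    (hfact : ∀ β : ℂ, (tL : ℂ) * β ^ 2 - E * β + (tR : ℂ) =
      (tL : ℂ) * (β - β₁) * (β - β₂))
    (hord : ‖β₁‖ ≤ ‖β₂‖)
    (R : ℝ) (hR : 0 < R)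
    (hR₁ : ‖β₁‖ < R) (hR₂ : R < ‖β₂‖) :
    (1 / (2 * π)) * ∫ θ in (0 : ℝ)..(2 * π),
        Real.log (‖
          ((tL : ℂ) * ((R : ℂ) * Complex.exp (θ * Complex.I)) +
            (tR : ℂ) * ((R : ℂ))⁻¹ * Complex.exp (-(θ * Complex.I)) - E)‖) =
      Real.log tL + Real.log ‖β₂‖ :=
  hatanoNelson_potential_local_form_general tL tR htL E β₁ β₂ hfact R hR₁ hR₂
end

section
/- Let t_L, t_R > 0 be real. Define Φ : ℂ → ℝ by Φ(z) = log(t_L) + log( max{ |β| : β ∈ ℂ, t_L β² − z β + t_R = 0 } ). Then for every real E with |E| < 2√(t_L t_R), lim_{ε→0⁺} ( Φ(E + iε) + Φ(E − iε) − 2Φ(E) ) / ε = 2 / √(4 t_L t_R − E²). -/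
/-!
Write `c = t_L t_R`. The roots `γ₁, γ₂` of `γ² - z γ + c` are `t_L` times those of
`t_L β² - z β + t_R`, so `Φ(z) = log max (|γ₁|, |γ₂|)`. Since `|γ₁| |γ₂| = c`, the larger modulus is
`(b + √(b² + 4c)) / 2` with `b = ||γ₁| - |γ₂||`, and the parallelogram law gives
`b² = (|z|² + |z² - 4c|) / 2 - 2c`, a function of `|z|` and `|z² - 4c|` only. Hence `Φ` is symmetric
under `z ↦ z̄`, `b` vanishes on the segment, and along `z = E + iε` one finds
`b² / ε² → 4c / (4c - E²)`. The chain rule through `b ↦ log ((b + √(b² + 4c)) / 2)`, whose slope at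
`0` is `1 / √(4c)`, gives the one-sided normal derivative `1 / √(4c - E²)` on each side.
-/

open Real Complex Filter Topology

/-- The local potential function of the Hatano–Nelson model:
`Φ(z) = log t_L + log (max{|β| : t_L β² − z β + t_R = 0})`. -/
noncomputable def hnPotential (tL tR : ℝ) (z : ℂ) : ℝ :=
  Real.log tL +
    Real.log (sSup ((fun β : ℂ => ‖β‖) '' {β : ℂ | (tL : ℂ) * β ^ 2 - z * β + (tR : ℂ) = 0}))

open ComplexConjugate Set

theorem Complex.exists_add_eq_and_mul_eq (s p : ℂ) : ∃ u v : ℂ, u + v = s ∧ u * v = p := by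
  obtain ⟨w, hw⟩ := IsAlgClosed.exists_pow_nat_eq (s ^ 2 - 4 * p) two_pos
  exact ⟨(s + w) / 2, (s - w) / 2, by ring, by linear_combination -hw / 4⟩

theorem max_eq_abs_sub_add_sqrt {a b : ℝ} (ha : 0 ≤ a) (hb : 0 ≤ b) :
    max a b = (|a - b| + √(|a - b| ^ 2 + 4 * (a * b))) / 2 := by
  rw [sq_abs, show (a - b) ^ 2 + 4 * (a * b) = (a + b) ^ 2 by ring, sqrt_sq (by positivity)]
  rcases le_total a b with h | h
  · rw [max_eq_right h, abs_of_nonpos (sub_nonpos.2 h)]; ring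
  · rw [max_eq_left h, abs_of_nonneg (sub_nonneg.2 h)]; ring

theorem Complex.sq_norm_sub_norm (u v : ℂ) :
    (‖u‖ - ‖v‖) ^ 2 = (‖u + v‖ ^ 2 + ‖(u + v) ^ 2 - 4 * (u * v)‖) / 2 - 2 * ‖u * v‖ := by
  have hpar : ‖u + v‖ ^ 2 + ‖u - v‖ ^ 2 = 2 * (‖u‖ ^ 2 + ‖v‖ ^ 2) := by
    simp only [Complex.sq_norm, normSq_add, normSq_sub]; ring
  rw [show (u + v) ^ 2 - 4 * (u * v) = (u - v) ^ 2 by ring, norm_pow, norm_mul]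
  linear_combination -hpar / 2

/-- The gap `|‖γ₁‖ - ‖γ₂‖|` between the moduli of the two roots of `γ² - z γ + c`. -/
noncomputable def rootGap (c : ℝ) (z : ℂ) : ℝ :=
  √((‖z‖ ^ 2 + ‖z ^ 2 - 4 * c‖) / 2 - 2 * c)

theorem rootGap_eq_abs_norm_sub_norm {c : ℝ} (hc : 0 ≤ c) {u v : ℂ} (hprod : u * v = c) :
    rootGap c (u + v) = |‖u‖ - ‖v‖| := by
  rw [rootGap, ← sqrt_sq_eq_abs, Complex.sq_norm_sub_norm, hprod, norm_real, norm_of_nonneg hc]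

theorem rootGap_conj (c : ℝ) (z : ℂ) : rootGap c (conj z) = rootGap c z := by
  have : conj z ^ 2 - 4 * (c : ℂ) = conj (z ^ 2 - 4 * c) := by simp [map_ofNat]
  rw [rootGap, rootGap, norm_conj, this, norm_conj]

theorem hnPotential_eq_log_max {tL tR : ℝ} (htL : 0 < tL) (htR : 0 < tR) {u v : ℂ}
    (hprod : u * v = tL * tR) : hnPotential tL tR (u + v) = Real.log (max ‖u‖ ‖v‖) := by
  have htL' : (tL : ℂ) ≠ 0 := ofReal_ne_zero.2 htL.ne'
  have hroots : {β : ℂ | (tL : ℂ) * β ^ 2 - (u + v) * β + tR = 0} = {u / tL, v / tL} := by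
    ext β
    have hfactor : (tL : ℂ) * β ^ 2 - (u + v) * β + tR = (β - u / tL) * (β - v / tL) * tL := by
      field_simp
      linear_combination (-1) * hprod
    simp [hfactor, htL', sub_eq_zero]
  have hmax : 0 < max ‖u‖ ‖v‖ := by
    have : u ≠ 0 := left_ne_zero_of_mul (by rw [hprod]; exact_mod_cast (mul_pos htL htR).ne')
    exact lt_max_of_lt_left (norm_pos_iff.2 this)
  rw [hnPotential, hroots, image_pair, csSup_pair, norm_div, norm_div, norm_real,
    norm_of_nonneg htL.le, max_div_div_right htL.le, ← Real.log_mul htL.ne' (by positivity),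
    mul_div_cancel₀ _ htL.ne']

theorem hnPotential_eq {tL tR : ℝ} (htL : 0 < tL) (htR : 0 < tR) (z : ℂ) :
    hnPotential tL tR z = Real.log
      ((rootGap (tL * tR) z + √(rootGap (tL * tR) z ^ 2 + 4 * (tL * tR))) / 2) := by
  obtain ⟨u, v, rfl, hprod⟩ := Complex.exists_add_eq_and_mul_eq z (tL * tR : ℝ)
  have hc : 0 ≤ tL * tR := (mul_pos htL htR).le
  rw [hnPotential_eq_log_max htL htR (by exact_mod_cast hprod),
    rootGap_eq_abs_norm_sub_norm hc hprod, max_eq_abs_sub_add_sqrt (norm_nonneg u) (norm_nonneg v),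
    ← norm_mul, hprod, norm_real, norm_of_nonneg hc]

theorem hnPotential_conj {tL tR : ℝ} (htL : 0 < tL) (htR : 0 < tR) (z : ℂ) :
    hnPotential tL tR (conj z) = hnPotential tL tR z := by
  rw [hnPotential_eq htL htR, hnPotential_eq htL htR, rootGap_conj]

theorem norm_add_mul_I_sq_sub (c E ε : ℝ) :
    ‖((E : ℂ) + ε * I) ^ 2 - 4 * c‖ = √((4 * c - E ^ 2 + ε ^ 2) ^ 2 + (2 * E * ε) ^ 2) := by
  have : ((E : ℂ) + ε * I) ^ 2 - 4 * c =
      ((E ^ 2 - ε ^ 2 - 4 * c : ℝ) : ℂ) + ((2 * E * ε : ℝ) : ℂ) * I := by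
    push_cast
    linear_combination (ε : ℂ) ^ 2 * I_sq
  rw [this, norm_add_mul_I]
  ring_nf

theorem rootGap_add_mul_I (c E ε : ℝ) :
    rootGap c (E + ε * I) = √((ε ^ 2 + √((4 * c - E ^ 2 + ε ^ 2) ^ 2 + (2 * E * ε) ^ 2)
      - (4 * c - E ^ 2)) / 2) := by
  rw [rootGap, norm_add_mul_I_sq_sub, norm_add_mul_I, sq_sqrt (by positivity)]
  ring_nf

theorem rootGap_ofReal {c E : ℝ} (hE : E ^ 2 ≤ 4 * c) : rootGap c E = 0 := by
  simpa [sub_nonneg.2 hE] using rootGap_add_mul_I c E 0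

theorem tendsto_sq_add_sqrt_sub_div_sq {D : ℝ} (hD : 0 < D) (E : ℝ) :
    Tendsto (fun ε : ℝ => (ε ^ 2 + √((D + ε ^ 2) ^ 2 + (2 * E * ε) ^ 2) - D) / 2 / ε ^ 2)
      (𝓝[≠] 0) (𝓝 ((D + E ^ 2) / D)) := by
  set R : ℝ → ℝ := fun ε => √((D + ε ^ 2) ^ 2 + (2 * E * ε) ^ 2)
  have hRD : ∀ ε, 0 < R ε + D := fun ε => by positivity
  -- rationalize `R ε - D` against `R ε + D`, which stays away from zero
  have hquot : ∀ ε ≠ (0 : ℝ), (ε ^ 2 + R ε - D) / 2 / ε ^ 2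
      = (1 + (ε ^ 2 + 2 * D + 4 * E ^ 2) / (R ε + D)) / 2 := by
    intro ε hε
    have hsq : R ε ^ 2 = (D + ε ^ 2) ^ 2 + (2 * E * ε) ^ 2 := sq_sqrt (by positivity)
    have := (hRD ε).ne'
    field_simp
    linear_combination hsq
  have hR0 : R 0 = D := by simp [R, hD.le]
  have hcont : ContinuousAt (fun ε => (1 + (ε ^ 2 + 2 * D + 4 * E ^ 2) / (R ε + D)) / 2) 0 := by
    fun_prop (disch := exact (hRD 0).ne')
  have hval : (1 + ((0 : ℝ) ^ 2 + 2 * D + 4 * E ^ 2) / (R 0 + D)) / 2 = (D + E ^ 2) / D := by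
    rw [hR0]; field_simp; ring
  rw [← hval]
  exact (hcont.tendsto.mono_left nhdsWithin_le_nhds).congr'
    (eventually_nhdsWithin_of_forall fun ε hε => (hquot ε hε).symm)

theorem hasDerivWithinAt_rootGap {c E : ℝ} (hE : E ^ 2 < 4 * c) :
    HasDerivWithinAt (fun ε : ℝ => rootGap c (E + ε * I)) (√(4 * c / (4 * c - E ^ 2)))
      (Ioi 0) 0 := by
  have hD : 0 < 4 * c - E ^ 2 := by linarith
  rw [hasDerivWithinAt_iff_tendsto_slope' self_notMem_Ioi]
  have hlim := ((tendsto_sq_add_sqrt_sub_div_sq hD E).mono_left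
    (nhdsWithin_mono _ fun ε (hε : 0 < ε) => hε.ne')).sqrt
  rw [sub_add_cancel] at hlim
  refine hlim.congr' (eventually_nhdsWithin_of_forall fun ε (hε : 0 < ε) => ?_)
  rw [slope_def_field, rootGap_add_mul_I, rootGap_add_mul_I, sqrt_div' _ (sq_nonneg ε),
    sqrt_sq hε.le]
  simp [hD.le]

theorem hasDerivAt_log_add_sqrt_div_two {c : ℝ} (hc : 0 < c) (b : ℝ) :
    HasDerivAt (fun x => Real.log ((x + √(x ^ 2 + 4 * c)) / 2)) (1 / √(b ^ 2 + 4 * c)) b := by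
  have hpos : 0 < b + √(b ^ 2 + 4 * c) := by
    have : |b| < √(b ^ 2 + 4 * c) := by
      rw [← sqrt_sq_eq_abs]; exact sqrt_lt_sqrt (sq_nonneg _) (by linarith)
    linarith [neg_abs_le b]
  have hsum : HasDerivAt (fun x => x + √(x ^ 2 + 4 * c))
      (1 + 2 * b / (2 * √(b ^ 2 + 4 * c))) b :=
    ((hasDerivAt_id' b).add (((hasDerivAt_pow 2 b).add_const (4 * c)).sqrt
      (by positivity))).congr_deriv (by norm_num)
  convert (hsum.div_const 2).log (by positivity) using 1
  field_simp
  ring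

/-- For `E` in the open spectral segment `(−2√(t_L t_R), 2√(t_L t_R))`, the sum of the
two one-sided normal derivatives of the potential `Φ` across the segment equals
`2/√(4 t_L t_R − E²)`; dividing by `2π` gives the linear density of states. -/
theorem hatanoNelson_linear_dos (tL tR : ℝ) (htL : 0 < tL) (htR : 0 < tR)
    (E : ℝ) (hE : |E| < 2 * Real.sqrt (tL * tR)) :
    Tendsto (fun ε : ℝ =>
        (hnPotential tL tR ((E : ℂ) + ε * Complex.I) +
          hnPotential tL tR ((E : ℂ) - ε * Complex.I) -
          2 * hnPotential tL tR (E : ℂ)) / ε)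
      (𝓝[>] 0)
      (𝓝 (2 / Real.sqrt (4 * tL * tR - E ^ 2))) := by
  have hc : 0 < tL * tR := mul_pos htL htR
  have hE' : E ^ 2 < 4 * (tL * tR) := by
    have := pow_lt_pow_left₀ hE (abs_nonneg E) two_ne_zero
    rwa [sq_abs, mul_pow, sq_sqrt hc.le, show (2 : ℝ) ^ 2 = 4 by norm_num] at this
  set f : ℝ → ℝ := fun ε => hnPotential tL tR (E + ε * I)
  have hf : HasDerivWithinAt f (1 / √(4 * tL * tR - E ^ 2)) (Ioi 0) 0 := by
    have h0 : 0 = rootGap (tL * tR) (E + (0 : ℝ) * I) := by simp [rootGap_ofReal hE'.le]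
    have hcomp : f = (fun b => Real.log ((b + √(b ^ 2 + 4 * (tL * tR))) / 2)) ∘
        fun ε : ℝ => rootGap (tL * tR) (E + ε * I) :=
      funext fun ε => hnPotential_eq htL htR _
    rw [hcomp]
    refine ((hasDerivAt_log_add_sqrt_div_two hc 0).comp_hasDerivWithinAt_of_eq 0
      (hasDerivWithinAt_rootGap hE') h0).congr_deriv ?_
    rw [zero_pow two_ne_zero, zero_add, sqrt_div' _ (by linarith)]
    field_simp
  have hslope := ((hasDerivWithinAt_iff_tendsto_slope' self_notMem_Ioi).1 hf).const_mul 2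
  rw [mul_one_div] at hslope
  refine hslope.congr' (eventually_nhdsWithin_of_forall fun ε hε => ?_)
  have hconj : (E : ℂ) - ε * I = conj ((E : ℂ) + ε * I) := by simp [sub_eq_add_neg]
  dsimp only
  rw [slope_def_field, hconj, hnPotential_conj htL htR]
  simp only [f, ofReal_zero, zero_mul, add_zero, sub_zero]
  ring
end

section
/- Let t_L, t_R > 0 be real and let E ∈ ℂ lie outside the real segment [−2√(t_L t_R), 2√(t_L t_R)]. Let β_2 be the root of t_L β² − E β + t_R of larger modulus. Then lim_{N→∞} (1/N) Σ_{m=1}^{N} log| 2√(t_L t_R)·cos(mπ/(N+1)) − E | = log(t_L) + log|β_2|. -/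
open Real Complex Filter Finset Topology

/-!
Put `c = t_L β₂` and `z = √(t_L t_R) / c`. Vieta's formulas give `z² = β₁ / β₂` and
`2√(t_L t_R) cos θ - E = -c (1 - 2 z cos θ + z²)`. Pairing conjugate `2(N+1)`-th roots of unity,
`(1 - z²) ∏_{m=1}^N (1 - 2 z cos (mπ/(N+1)) + z²) = 1 - z^(2N+2)`, so for `|z| < 1` the sums
`∑_m log |1 - 2 z cos (mπ/(N+1)) + z²|` converge (to `-log |1 - z²|`) and only `log |c|` survives
the division by `N`. Finally `|z| ≤ 1` because `|β₁| ≤ |β₂|`, and `|z| = 1` is excluded because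
`z = e^{iθ}` would make `E = 2√(t_L t_R) cos θ` a point of the segment.
-/

theorem one_sub_pow_eq_prod {R : Type*} [CommRing R] [IsDomain R] {ζ : R} {n : ℕ}
    (hζ : IsPrimitiveRoot ζ n) (hn : 0 < n) (z : R) :
    1 - z ^ n = ∏ k ∈ range n, (1 - ζ ^ k * z) := by
  simpa [Polynomial.eval_prod] using
    congrArg (Polynomial.eval 1) (X_pow_sub_C_eq_prod hζ hn (α := z) rfl)

theorem prod_range_two_mul_add_two {M : Type*} [CommMonoid M] (f : ℕ → M) (N : ℕ) :
    ∏ k ∈ range (2 * N + 2), f k =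
      f 0 * f (N + 1) * ∏ m ∈ Icc 1 N, (f m * f (2 * N + 2 - m)) := by
  have hreflect : ∏ j ∈ range N, f (N + 2 + (N - 1 - j)) =
      ∏ j ∈ range N, f (2 * N + 2 - (1 + j)) :=
    prod_congr rfl fun j hj => congrArg f (by rw [mem_range] at hj; omega)
  nth_rw 1 [show 2 * N + 2 = N + 2 + N by ring]
  rw [prod_range_add, prod_range_succ, prod_range_succ',
    ← prod_range_reflect (fun j => f (N + 2 + j)), hreflect, prod_mul_distrib,
    ← Ico_add_one_right_eq_Icc, prod_Ico_eq_prod_range, prod_Ico_eq_prod_range,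
    add_tsub_cancel_right]
  simp only [add_comm _ 1]
  ac_rfl

theorem one_sub_two_mul_cos_add_sq (z : ℂ) (θ : ℝ) :
    1 - 2 * z * Real.cos θ + z ^ 2 = (1 - exp (θ * I) * z) * (1 - (exp (θ * I))⁻¹ * z) := by
  have h : exp (θ * I) * (exp (θ * I))⁻¹ = 1 := mul_inv_cancel₀ (Complex.exp_ne_zero _)
  rw [ofReal_cos, Complex.cos, neg_mul, Complex.exp_neg]
  linear_combination (-z ^ 2) * h

theorem one_sub_sq_mul_prod_one_sub_two_mul_cos_add_sq (z : ℂ) (N : ℕ) :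
    (1 - z ^ 2) * ∏ m ∈ Icc 1 N, (1 - 2 * z * Real.cos (m * π / (N + 1)) + z ^ 2) =
      1 - z ^ (2 * N + 2) := by
  set ζ := exp (π * I / (N + 1))
  have hζ : IsPrimitiveRoot ζ (2 * N + 2) := by
    convert isPrimitiveRoot_exp (2 * N + 2) (by omega) using 2
    push_cast
    field_simp
  have hpow (k : ℕ) : ζ ^ k = exp ((k * π / (N + 1) : ℝ) * I) := by
    rw [← Complex.exp_nat_mul]
    push_cast
    ring_nf
  have hhalf : ζ ^ (N + 1) = -1 := by
    rw [hpow, ← exp_pi_mul_I]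
    push_cast
    field_simp
  have hreflect (m : ℕ) (hm : m ≤ 2 * N + 2) : ζ ^ (2 * N + 2 - m) = (ζ ^ m)⁻¹ := by
    rw [pow_sub₀ _ (Complex.exp_ne_zero _) hm, hζ.pow_eq_one, one_mul]
  rw [one_sub_pow_eq_prod hζ (by omega), prod_range_two_mul_add_two, pow_zero, hhalf,
    prod_congr rfl fun m hm => ?_]
  · ring
  · rw [hreflect m (by simp at hm; omega), hpow, one_sub_two_mul_cos_add_sq]

theorem one_sub_ne_zero_of_norm_lt_one {R : Type*} [SeminormedRing R] [NormOneClass R] {w : R}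
    (hw : ‖w‖ < 1) : 1 - w ≠ 0 := by
  rw [sub_ne_zero]
  rintro rfl
  simp at hw

theorem one_sub_two_mul_cos_add_sq_ne_zero {z : ℂ} (hz : ‖z‖ < 1) (θ : ℝ) :
    1 - 2 * z * Real.cos θ + z ^ 2 ≠ 0 := by
  rw [one_sub_two_mul_cos_add_sq]
  refine mul_ne_zero (one_sub_ne_zero_of_norm_lt_one ?_) (one_sub_ne_zero_of_norm_lt_one ?_) <;>
    simpa [norm_exp_ofReal_mul_I] using hz

theorem sum_log_norm_one_sub_two_mul_cos_add_sq {z : ℂ} (hz : ‖z‖ < 1) (N : ℕ) :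
    ∑ m ∈ Icc 1 N, Real.log ‖1 - 2 * z * Real.cos (m * π / (N + 1)) + z ^ 2‖ =
      Real.log ‖1 - z ^ (2 * N + 2)‖ - Real.log ‖1 - z ^ 2‖ := by
  have hsq : ‖1 - z ^ 2‖ ≠ 0 := norm_ne_zero_iff.2 <| one_sub_ne_zero_of_norm_lt_one <| by
    simpa using pow_lt_one₀ (norm_nonneg z) hz two_ne_zero
  have hne (θ : ℝ) : ‖1 - 2 * z * Real.cos θ + z ^ 2‖ ≠ 0 :=
    norm_ne_zero_iff.2 (one_sub_two_mul_cos_add_sq_ne_zero hz θ)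
  rw [← Real.log_prod fun m _ => hne _, ← norm_prod,
    ← one_sub_sq_mul_prod_one_sub_two_mul_cos_add_sq, norm_mul,
    Real.log_mul hsq (by rw [norm_prod]; exact prod_ne_zero_iff.2 fun m _ => hne _)]
  ring

theorem tendsto_sum_log_norm_one_sub_two_mul_cos_add_sq {z : ℂ} (hz : ‖z‖ < 1) :
    Tendsto (fun N : ℕ =>
        ∑ m ∈ Icc 1 N, Real.log ‖1 - 2 * z * Real.cos (m * π / (N + 1)) + z ^ 2‖)
      atTop (𝓝 (-Real.log ‖1 - z ^ 2‖)) := by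
  simp_rw [sum_log_norm_one_sub_two_mul_cos_add_sq hz]
  have hpow : Tendsto (fun N : ℕ => z ^ (2 * N + 2)) atTop (𝓝 0) :=
    (tendsto_pow_atTop_nhds_zero_of_norm_lt_one hz).comp
      (tendsto_atTop_mono (fun N => (by omega : N ≤ 2 * N + 2)) tendsto_id)
  have hnorm : Tendsto (fun N : ℕ => ‖1 - z ^ (2 * N + 2)‖) atTop (𝓝 1) := by
    simpa using ((tendsto_const_nhds (x := (1 : ℂ))).sub hpow).norm
  simpa using (hnorm.log one_ne_zero).sub_const (Real.log ‖1 - z ^ 2‖)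

theorem tendsto_one_div_mul_sum_log_norm_mul_one_sub_two_mul_cos_add_sq {c z : ℂ} (hc : c ≠ 0)
    (hz : ‖z‖ < 1) :
    Tendsto (fun N : ℕ => (1 / (N : ℝ)) * ∑ m ∈ Icc 1 N,
        Real.log ‖c * (1 - 2 * z * Real.cos (m * π / (N + 1)) + z ^ 2)‖)
      atTop (𝓝 (Real.log ‖c‖)) := by
  have hsplit : ∀ᶠ N : ℕ in atTop, Real.log ‖c‖ + (1 / (N : ℝ)) * ∑ m ∈ Icc 1 N,
        Real.log ‖1 - 2 * z * Real.cos (m * π / (N + 1)) + z ^ 2‖ =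
      (1 / (N : ℝ)) * ∑ m ∈ Icc 1 N,
        Real.log ‖c * (1 - 2 * z * Real.cos (m * π / (N + 1)) + z ^ 2)‖ := by
    filter_upwards [eventually_ne_atTop 0] with N hN
    simp_rw [norm_mul, Real.log_mul (norm_ne_zero_iff.2 hc)
      (norm_ne_zero_iff.2 (one_sub_two_mul_cos_add_sq_ne_zero hz _)), sum_add_distrib, sum_const,
      Nat.card_Icc, add_tsub_cancel_right, nsmul_eq_mul]
    rw [mul_add, ← mul_assoc, one_div_mul_cancel (by exact_mod_cast hN), one_mul]
  simpa using (tendsto_const_nhds.add (tendsto_one_div_atTop_nhds_zero_nat.mul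
    (tendsto_sum_log_norm_one_sub_two_mul_cos_add_sq hz))).congr' hsplit

theorem norm_ne_one_of_forall_one_sub_two_mul_cos_add_sq_ne_zero {z : ℂ}
    (h : ∀ θ : ℝ, 1 - 2 * z * Real.cos θ + z ^ 2 ≠ 0) : ‖z‖ ≠ 1 := by
  intro hz
  obtain ⟨θ, rfl⟩ := (norm_eq_one_iff z).1 hz
  apply h θ
  rw [one_sub_two_mul_cos_add_sq, inv_mul_cancel₀ (Complex.exp_ne_zero _), sub_self, mul_zero]

theorem ofReal_two_mul_mul_cos_ne {s : ℝ} (hs : 0 ≤ s) {E : ℂ}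
    (hE : ¬ (E.im = 0 ∧ |E.re| ≤ 2 * s)) (θ : ℝ) : ((2 * s * Real.cos θ : ℝ) : ℂ) ≠ E := by
  rintro rfl
  refine hE ⟨ofReal_im _, ?_⟩
  rw [ofReal_re, abs_mul, abs_of_nonneg (by positivity)]
  exact mul_le_of_le_one_right (by positivity) (abs_cos_le_one θ)

section HatanoNelson

variable {tL tR : ℝ} {E β₁ β₂ : ℂ}

theorem hatanoNelson_sub_eq_neg_mul (htL : 0 < tL) (htR : 0 ≤ tR) (hβ₂ : β₂ ≠ 0)
    (hsum : E = tL * (β₁ + β₂)) (hprod : (tR : ℂ) = tL * (β₁ * β₂)) (θ : ℝ) :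
    ((2 * √(tL * tR) * Real.cos θ : ℝ) : ℂ) - E =
      -(tL * β₂) * (1 - 2 * (√(tL * tR) / (tL * β₂)) * Real.cos θ +
        (√(tL * tR) / (tL * β₂)) ^ 2) := by
  have hs : ((√(tL * tR) : ℝ) : ℂ) ^ 2 = tL * tR := by
    exact_mod_cast Real.sq_sqrt (by positivity)
  have htL' : (tL : ℂ) ≠ 0 := ofReal_ne_zero.2 htL.ne'
  field_simp
  push_cast
  linear_combination (-tL * β₂) * hsum + hs + tL * hprod

theorem hatanoNelson_norm_lt_one (htL : 0 < tL) (htR : 0 ≤ tR) (hβ₂ : β₂ ≠ 0)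
    (hsum : E = tL * (β₁ + β₂)) (hprod : (tR : ℂ) = tL * (β₁ * β₂)) (hord : ‖β₁‖ ≤ ‖β₂‖)
    (hE : ¬ (E.im = 0 ∧ |E.re| ≤ 2 * √(tL * tR))) :
    ‖(√(tL * tR) : ℂ) / (tL * β₂)‖ < 1 := by
  have hs : ((√(tL * tR) : ℝ) : ℂ) ^ 2 = tL * tR := by
    exact_mod_cast Real.sq_sqrt (by positivity)
  have htL' : (tL : ℂ) ≠ 0 := ofReal_ne_zero.2 htL.ne'
  have hsq : ((√(tL * tR) : ℂ) / (tL * β₂)) ^ 2 = β₁ / β₂ := by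
    field_simp
    linear_combination hs + tL * hprod
  have hle : ‖(√(tL * tR) : ℂ) / (tL * β₂)‖ ≤ 1 := by
    refine (pow_le_one_iff_of_nonneg (norm_nonneg _) two_ne_zero).1 ?_
    rw [← norm_pow, hsq, norm_div]
    exact div_le_one_of_le₀ hord (norm_nonneg _)
  refine hle.lt_of_ne <| norm_ne_one_of_forall_one_sub_two_mul_cos_add_sq_ne_zero fun θ h => ?_
  refine ofReal_two_mul_mul_cos_ne (Real.sqrt_nonneg _) hE θ (sub_eq_zero.1 ?_)
  rw [hatanoNelson_sub_eq_neg_mul htL htR hβ₂ hsum hprod, h, mul_zero]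

end HatanoNelson

/-- Szegő-limit identity for the Hatano–Nelson model: for `E` outside the real spectral
segment `[−2√(t_L t_R), 2√(t_L t_R)]`, the Coulomb potential obtained by assigning charge
`1/N` to each open-boundary eigenvalue `2√(t_L t_R) cos(mπ/(N+1))` converges, as `N → ∞`,
to `log t_L + log|β₂|`, where `β₂` is the root of `t_L β² − E β + t_R` of larger modulus. -/
theorem hatanoNelson_szego_limit (tL tR : ℝ) (htL : 0 < tL) (htR : 0 < tR)
    (E : ℂ) (hE : ¬ (E.im = 0 ∧ |E.re| ≤ 2 * Real.sqrt (tL * tR)))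
    (β₁ β₂ : ℂ)
    (hfact : ∀ β : ℂ, (tL : ℂ) * β ^ 2 - E * β + (tR : ℂ) =
      (tL : ℂ) * (β - β₁) * (β - β₂))
    (hord : ‖β₁‖ ≤ ‖β₂‖) :
    Tendsto (fun N : ℕ =>
        (1 / (N : ℝ)) * ∑ m ∈ Finset.Icc 1 N,
          Real.log (‖
            (((2 * Real.sqrt (tL * tR) * Real.cos (m * π / (N + 1)) : ℝ) : ℂ) - E)‖))
      atTop
      (𝓝 (Real.log tL + Real.log ‖β₂‖)) := by
  have hsum : E = tL * (β₁ + β₂) := by linear_combination hfact 0 - hfact 1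
  have hprod : (tR : ℂ) = tL * (β₁ * β₂) := by linear_combination hfact 0
  have hβ₂ : β₂ ≠ 0 :=
    right_ne_zero_of_mul (right_ne_zero_of_mul (hprod ▸ ofReal_ne_zero.2 htR.ne'))
  have hc : (tL : ℂ) * β₂ ≠ 0 := mul_ne_zero (ofReal_ne_zero.2 htL.ne') hβ₂
  simp_rw [hatanoNelson_sub_eq_neg_mul htL htR.le hβ₂ hsum hprod]
  convert tendsto_one_div_mul_sum_log_norm_mul_one_sub_two_mul_cos_add_sq (neg_ne_zero.2 hc)
    (hatanoNelson_norm_lt_one htL htR.le hβ₂ hsum hprod hord hE) using 2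
  rw [norm_neg, norm_mul, norm_real, Real.norm_of_nonneg htL.le,
    Real.log_mul htL.ne' (norm_ne_zero_iff.2 hβ₂)]
end

section
/- For E ∈ ℂ, let β_1, β_2, β_3 be the three roots (with multiplicity) of β³ − E β + 1, ordered so that |β_1| ≤ |β_2| ≤ |β_3|. Then |β_1| = |β_2| if and only if E = ξ e^{2πim/3} for some m ∈ {0, 1, 2} and some real ξ ∈ [0, 3·4^{−1/3}]. That is, the set of E satisfying the GBZ condition for H(β) = β² + β^{−1} is the union of the three segments e^{2πim/3}·[0, 3/∛4], forming a three-fold symmetric fan joined at E = 0. -/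
/-!
By Vieta, `β₁ + β₂ + β₃ = 0` and `β₁ β₂ β₃ = -1`. If `v, w` are two of the roots and `-u` is
the third, then `v + w = u` and `v w u = 1`, and `|v| = |w|` holds exactly when
`(v + w)² / (v w) ∈ [0, 4]`, i.e. when `u³ ∈ [0, 4]`.

If `|β₁| = |β₂|`, then `u = -β₃` has `|u| ≥ 1`, so `u³ = t ∈ [1, 4]`, and `E u = t - 1` because
`-u` is a root. Conversely such a `u` makes `-u` a root, and the other two roots have a common
modulus `≤ 1 ≤ |u|`, so they are the two smallest ones.

Finally, `E u = u³ - 1` with `u³ ∈ [1, 4]` means `E = (ρ² - ρ⁻¹) ω` with `ρ = |u| ∈ [1, ∛4]` and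
`ω = ρ / u` a cube root of unity, and `ρ ↦ ρ² - ρ⁻¹` maps `[1, ∛4]` increasingly onto
`[0, 3 / ∛4]`.
-/

open Real Complex Set

lemma norm_eq_one_iff_add_one_sq_eq_mul {z : ℂ} :
    ‖z‖ = 1 ↔ ∃ t : ℝ, t ∈ Icc 0 4 ∧ (z + 1) ^ 2 = t * z := by
  rw [← pow_eq_one_iff_of_nonneg (norm_nonneg z) two_ne_zero, Complex.sq_norm,
    Complex.normSq_apply]
  constructor
  · intro h
    have hre := abs_le.mp (Complex.abs_re_le_norm z)
    refine ⟨2 * z.re + 2, ⟨by nlinarith, by nlinarith⟩, ?_⟩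
    apply Complex.ext <;> simp [pow_two] <;> nlinarith
  · rintro ⟨t, ⟨ht0, ht4⟩, h⟩
    have hre := congrArg Complex.re h
    have him := congrArg Complex.im h
    simp only [pow_two, Complex.mul_re, Complex.mul_im, Complex.add_re, Complex.add_im,
      Complex.one_re, Complex.one_im, Complex.ofReal_re, Complex.ofReal_im] at hre him
    have hcases : z.im * (2 * (z.re + 1) - t) = 0 := by linarith
    rcases mul_eq_zero.mp hcases with hy | hx
    · -- `z` is a real root of `x² + (2 - t) x + 1`, whose discriminant `t (t - 4)` is `≤ 0`
      rw [hy] at hre ⊢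
      nlinarith [sq_nonneg (2 * z.re + 2 - t), mul_nonneg ht0 (sub_nonneg.mpr ht4)]
    · nlinarith

lemma norm_eq_norm_iff_pow_three_mem_Icc {v w u : ℂ} (hsum : v + w = u)
    (hprod : v * w * u = 1) :
    ‖v‖ = ‖w‖ ↔ ∃ t : ℝ, t ∈ Icc 0 4 ∧ u ^ 3 = t := by
  have hw : w ≠ 0 := by rintro rfl; simp at hprod
  have hratio : ∀ t : ℂ, (v / w + 1) ^ 2 = t * (v / w) ↔ u ^ 3 = t := by
    intro t
    rw [div_add_one hw, div_pow, div_eq_iff (pow_ne_zero 2 hw), hsum]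
    constructor
    · intro h
      field_simp at h
      linear_combination u * h + t * hprod
    · intro h
      field_simp
      linear_combination -u ^ 2 * hprod + v * w * h
  rw [← div_eq_one_iff_eq (norm_ne_zero_iff.mpr hw), ← norm_div,
    norm_eq_one_iff_add_one_sq_eq_mul]
  simp only [hratio]

lemma norm_eq_norm_and_norm_le_of_pow_three_eq {v w u : ℂ} {t : ℝ} (hsum : v + w = u)
    (hprod : v * w * u = 1) (ht : t ∈ Icc 1 4) (hu : u ^ 3 = t) :
    ‖v‖ = ‖w‖ ∧ ‖v‖ ≤ ‖u‖ := by
  have hvw : ‖v‖ = ‖w‖ := (norm_eq_norm_iff_pow_three_mem_Icc hsum hprod).mpr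
    ⟨t, ⟨zero_le_one.trans ht.1, ht.2⟩, hu⟩
  have hnorm : ‖v‖ ^ 2 * ‖u‖ = 1 := by
    rw [sq, ← norm_one (α := ℂ), ← hprod, norm_mul, norm_mul, hvw]
  have hu1 : 1 ≤ ‖u‖ := by
    rw [← one_le_pow_iff_of_nonneg (norm_nonneg u) three_ne_zero, ← norm_pow, hu,
      Complex.norm_of_nonneg (zero_le_one.trans ht.1)]
    exact ht.1
  have hv1 : ‖v‖ ≤ 1 := by nlinarith [norm_nonneg v]
  exact ⟨hvw, hv1.trans hu1⟩

lemma exists_fin_three_eq_exp_of_pow_three_eq_one {z : ℂ} (hz : z ^ 3 = 1) :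
    ∃ m : Fin 3, z = Complex.exp (2 * π * Complex.I * (m : ℕ) / 3) := by
  obtain ⟨k, hk, rfl⟩ := (isPrimitiveRoot_exp 3 three_ne_zero).eq_pow_of_pow_eq_one hz
  refine ⟨⟨k, hk⟩, ?_⟩
  rw [← Complex.exp_nat_mul]
  push_cast
  ring_nf

lemma exp_two_pi_mul_I_mul_div_three_pow_three (m : ℕ) :
    Complex.exp (2 * π * Complex.I * m / 3) ^ 3 = 1 := by
  rw [← Complex.exp_nat_mul, ← Complex.exp_nat_mul_two_pi_mul_I m]
  push_cast
  ring_nf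

lemma continuousOn_sq_sub_inv : ContinuousOn (fun ρ : ℝ => ρ ^ 2 - ρ⁻¹) (Ici 1) := by
  fun_prop (disch := intro x hx; exact (zero_lt_one.trans_le hx).ne')

lemma cbrt_four_pow_three : ((4 : ℝ) ^ (3 : ℝ)⁻¹) ^ 3 = 4 := by
  simpa using Real.rpow_inv_natCast_pow (x := 4) (n := 3) (by norm_num) (by norm_num)

lemma three_mul_four_rpow_neg_third :
    3 * (4 : ℝ) ^ (-(1 : ℝ) / 3) = ((4 : ℝ) ^ (3 : ℝ)⁻¹) ^ 2 - ((4 : ℝ) ^ (3 : ℝ)⁻¹)⁻¹ := by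
  rw [neg_div, one_div, Real.rpow_neg zero_le_four]
  have ha : (0 : ℝ) < (4 : ℝ) ^ (3 : ℝ)⁻¹ := by positivity
  have ha3 := cbrt_four_pow_three
  generalize (4 : ℝ) ^ (3 : ℝ)⁻¹ = a at ha ha3 ⊢
  field_simp
  linear_combination -ha3

lemma one_le_cbrt_four : 1 ≤ (4 : ℝ) ^ (3 : ℝ)⁻¹ :=
  (one_le_pow_iff_of_nonneg (by positivity) three_ne_zero).mp
    (by rw [cbrt_four_pow_three]; norm_num)

lemma exists_pow_three_eq_of_eq_mul_exp {E : ℂ} {m : ℕ} {ξ : ℝ} (hξ0 : 0 ≤ ξ)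
    (hξ : ξ ≤ 3 * (4 : ℝ) ^ (-(1 : ℝ) / 3))
    (hE : E = (ξ : ℂ) * Complex.exp (2 * π * Complex.I * m / 3)) :
    ∃ u : ℂ, ∃ t : ℝ, t ∈ Icc 1 4 ∧ u ^ 3 = t ∧ E * u = t - 1 := by
  rw [three_mul_four_rpow_neg_third] at hξ
  obtain ⟨ρ, ⟨hρ1, hρa⟩, hρξ⟩ := intermediate_value_Icc one_le_cbrt_four
    (continuousOn_sq_sub_inv.mono Icc_subset_Ici_self) ⟨by simpa using hξ0, hξ⟩
  set ω := Complex.exp (2 * π * Complex.I * m / 3)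
  have hω : ω ^ 3 = 1 := exp_two_pi_mul_I_mul_div_three_pow_three m
  have hρ0 : (ρ : ℂ) ≠ 0 := by exact_mod_cast (zero_lt_one.trans_le hρ1).ne'
  refine ⟨ρ * ω ^ 2, ρ ^ 3, ⟨one_le_pow₀ hρ1, ?_⟩, ?_, ?_⟩
  · rw [← cbrt_four_pow_three]
    exact pow_le_pow_left₀ (zero_le_one.trans hρ1) hρa 3
  · push_cast
    linear_combination (ρ : ℂ) ^ 3 * (ω ^ 3 + 1) * hω
  · rw [hE, ← hρξ]
    push_cast
    field_simp
    linear_combination ((ρ : ℂ) ^ 3 - 1) * hω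

lemma exists_eq_mul_exp_of_pow_three_eq {E u : ℂ} {t : ℝ} (ht : t ∈ Icc 1 4)
    (hu : u ^ 3 = t) (hEu : E * u = t - 1) :
    ∃ m : Fin 3, ∃ ξ : ℝ, 0 ≤ ξ ∧ ξ ≤ 3 * (4 : ℝ) ^ (-(1 : ℝ) / 3) ∧
      E = (ξ : ℂ) * Complex.exp (2 * π * Complex.I * (m : ℕ) / 3) := by
  set ρ := ‖u‖
  have hρ3 : ρ ^ 3 = t := by
    rw [← norm_pow, hu, Complex.norm_of_nonneg (zero_le_one.trans ht.1)]
  have hρ1 : 1 ≤ ρ := (one_le_pow_iff_of_nonneg (norm_nonneg u) three_ne_zero).mp (hρ3 ▸ ht.1)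
  have hρa : ρ ≤ (4 : ℝ) ^ (3 : ℝ)⁻¹ :=
    (pow_le_pow_iff_left₀ (norm_nonneg u) (by positivity) three_ne_zero).mp
      (by rw [hρ3, cbrt_four_pow_three]; exact ht.2)
  have hρpos : 0 < ρ := zero_lt_one.trans_le hρ1
  have hρ0 : (ρ : ℂ) ≠ 0 := by exact_mod_cast hρpos.ne'
  have hu0 : u ≠ 0 := norm_ne_zero_iff.mp hρpos.ne'
  obtain ⟨m, hm⟩ := exists_fin_three_eq_exp_of_pow_three_eq_one (z := ρ / u) (by
    rw [div_pow, hu, ← hρ3]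
    push_cast
    exact div_self (pow_ne_zero 3 hρ0))
  refine ⟨m, ρ ^ 2 - ρ⁻¹, ?_, by rw [three_mul_four_rpow_neg_third]; gcongr, ?_⟩
  · have : ρ⁻¹ ≤ 1 := inv_le_one_of_one_le₀ hρ1
    nlinarith
  · have ht : (t : ℂ) = (ρ : ℂ) ^ 3 := by exact_mod_cast hρ3.symm
    rw [← hm]
    push_cast
    field_simp
    linear_combination hEu + ht

section

variable {E β₁ β₂ β₃ : ℂ}

lemma add_add_eq_zero_of_cubic_eq
    (hfact : ∀ β : ℂ, β ^ 3 - E * β + 1 = (β - β₁) * (β - β₂) * (β - β₃)) :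
    β₁ + β₂ + β₃ = 0 := by
  linear_combination (hfact 1 + hfact (-1)) / 2 - hfact 0

lemma mul_mul_eq_neg_one_of_cubic_eq
    (hfact : ∀ β : ℂ, β ^ 3 - E * β + 1 = (β - β₁) * (β - β₂) * (β - β₃)) :
    β₁ * β₂ * β₃ = -1 := by
  linear_combination hfact 0

lemma exists_pow_three_eq_of_norm_eq
    (hfact : ∀ β : ℂ, β ^ 3 - E * β + 1 = (β - β₁) * (β - β₂) * (β - β₃))
    (hord₁ : ‖β₁‖ ≤ ‖β₂‖) (hord₂ : ‖β₂‖ ≤ ‖β₃‖) (h : ‖β₁‖ = ‖β₂‖) :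
    ∃ u : ℂ, ∃ t : ℝ, t ∈ Icc 1 4 ∧ u ^ 3 = t ∧ E * u = t - 1 := by
  have hsum := add_add_eq_zero_of_cubic_eq hfact
  have hprod := mul_mul_eq_neg_one_of_cubic_eq hfact
  obtain ⟨t, ⟨ht0, ht4⟩, hu⟩ := (norm_eq_norm_iff_pow_three_mem_Icc (u := -β₃)
    (by linear_combination hsum) (by linear_combination -hprod)).mp h
  have hβ₃ : 1 ≤ ‖β₃‖ ^ 3 :=
    calc 1 = ‖β₁‖ * ‖β₂‖ * ‖β₃‖ := by rw [← norm_mul, ← norm_mul, hprod, norm_neg, norm_one]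
      _ ≤ ‖β₃‖ * ‖β₃‖ * ‖β₃‖ := by gcongr; exact hord₁.trans hord₂
      _ = ‖β₃‖ ^ 3 := by ring
  have ht : ‖β₃‖ ^ 3 = t := by
    rw [← norm_neg, ← norm_pow, hu, Complex.norm_of_nonneg ht0]
  refine ⟨-β₃, t, ⟨ht ▸ hβ₃, ht4⟩, hu, ?_⟩
  linear_combination hfact β₃ + hu

lemma norm_eq_of_pow_three_eq
    (hfact : ∀ β : ℂ, β ^ 3 - E * β + 1 = (β - β₁) * (β - β₂) * (β - β₃))
    (hord₁ : ‖β₁‖ ≤ ‖β₂‖) (hord₂ : ‖β₂‖ ≤ ‖β₃‖) {u : ℂ} {t : ℝ} (ht : t ∈ Icc 1 4)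
    (hu : u ^ 3 = t) (hEu : E * u = t - 1) : ‖β₁‖ = ‖β₂‖ := by
  have hsum := add_add_eq_zero_of_cubic_eq hfact
  have hprod := mul_mul_eq_neg_one_of_cubic_eq hfact
  have hroot : (-u - β₁) * (-u - β₂) * (-u - β₃) = 0 := by
    rw [← hfact]
    linear_combination hEu - hu
  rcases mul_eq_zero.mp hroot with h | h₃
  rcases mul_eq_zero.mp h with h₁ | h₂
  · obtain ⟨h₂₃, h₂u⟩ := norm_eq_norm_and_norm_le_of_pow_three_eq (v := β₂) (w := β₃)
      (by linear_combination hsum + h₁) (by linear_combination -hprod - β₂ * β₃ * h₁) ht hu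
    rw [show β₁ = -u by linear_combination -h₁, norm_neg] at hord₁ ⊢
    linarith
  · obtain ⟨h₁₃, h₁u⟩ := norm_eq_norm_and_norm_le_of_pow_three_eq (v := β₁) (w := β₃)
      (by linear_combination hsum + h₂) (by linear_combination -hprod - β₁ * β₃ * h₂) ht hu
    rw [show β₂ = -u by linear_combination -h₂, norm_neg] at hord₂ ⊢
    linarith
  · exact (norm_eq_norm_and_norm_le_of_pow_three_eq
      (by linear_combination hsum + h₃) (by linear_combination -hprod - β₁ * β₂ * h₃) ht hu).1

end

/-- GBZ condition for the fan model `H(β) = β² + β⁻¹`: with the roots `β₁, β₂, β₃` of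
`β³ − E β + 1` ordered by increasing modulus, `|β₁| = |β₂|` holds if and only if
`E = ξ e^{2πim/3}` for some `m ∈ {0,1,2}` and some real `ξ ∈ [0, 3·4^{−1/3}]`;
i.e. the spectral graph is a three-fold symmetric fan joined at `E = 0`. -/
theorem fan_model_gbz_condition (E : ℂ) (β₁ β₂ β₃ : ℂ)
    (hfact : ∀ β : ℂ, β ^ 3 - E * β + 1 = (β - β₁) * (β - β₂) * (β - β₃))
    (hord₁ : ‖β₁‖ ≤ ‖β₂‖)
    (hord₂ : ‖β₂‖ ≤ ‖β₃‖) :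
    ‖β₁‖ = ‖β₂‖ ↔
      ∃ m : Fin 3, ∃ ξ : ℝ, 0 ≤ ξ ∧ ξ ≤ 3 * (4 : ℝ) ^ (-(1 : ℝ) / 3) ∧
        E = (ξ : ℂ) * Complex.exp (2 * π * Complex.I * (m : ℕ) / 3) := by
  constructor
  · intro h
    obtain ⟨u, t, ht, hu, hEu⟩ := exists_pow_three_eq_of_norm_eq hfact hord₁ hord₂ h
    exact exists_eq_mul_exp_of_pow_three_eq ht hu hEu
  · rintro ⟨m, ξ, hξ0, hξ, hE⟩
    obtain ⟨u, t, ht, hu, hEu⟩ := exists_pow_three_eq_of_eq_mul_exp hξ0 hξ hE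
    exact norm_eq_of_pow_three_eq hfact hord₁ hord₂ ht hu hEu
end
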